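/- The randomized RandGreeDi algorithm, run with an α-approximate Greedy in the first round and a β-approximate algorithm Alg in the second round, returns a solution D with E[f(D)] ≥ (αβ/(α+β))·f(OPT) for maximizing a monotone submodular function subject to a hereditary constraint. -/

import Mathlib

open MeasureTheory Finset

/-- A set function is submodular. -/
def Submodular {V : Type*} [DecidableEq V] (f : Finset V → ℝ) : Prop :=
  ∀ A B : Finset V, f (A ∪ B) + f (A ∩ B) ≤ f A + f B

/-- The Lovász extension: expectation over a uniform threshold θ ∈ (0,1). -/
noncomputable def lovasz {V : Type*} [Fintype V] [DecidableEq V]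
    (f : Finset V → ℝ) (x : V → ℝ) : ℝ :=
  ∫ θ in Set.Ioo (0:ℝ) 1, f (Finset.univ.filter (fun i => θ ≤ x i))

/-- Characteristic vector of a finite set. -/
def charVec {V : Type*} [DecidableEq V] (S : Finset V) : V → ℝ :=
  fun i => if i ∈ S then 1 else 0
/-- One pass of the standard greedy algorithm with fuel `n`: at each step add the
feasible element of `X` with maximum nonnegative marginal gain, breaking ties by
the fixed linear order on `V` (choosing the least maximizer). -/
noncomputable def greedyAux {V : Type*} [Fintype V] [DecidableEq V] [LinearOrder V]
    (f : Finset V → ℝ) (I : Finset V → Prop) [DecidablePred I]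
    (X : Finset V) : ℕ → Finset V → Finset V
  | 0, S => S
  | (n+1), S =>
    let C := (X \ S).filter (fun e => I (insert e S) ∧ 0 ≤ f (insert e S) - f S)
    let M := C.filter (fun e => ∀ e' ∈ C, f (insert e' S) - f S ≤ f (insert e S) - f S)
    if h : M.Nonempty then greedyAux f I X n (insert (M.min' h) S) else S

/-- The standard greedy algorithm on ground set `X`. -/
noncomputable def greedy {V : Type*} [Fintype V] [DecidableEq V] [LinearOrder V]
    (f : Finset V → ℝ) (I : Finset V → Prop) [DecidablePred I]
    (X : Finset V) : Finset V :=
  greedyAux f I X (Fintype.card V) ∅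
/-- Expectation of `g` over a uniformly random assignment of elements to `m` machines. -/
noncomputable def expAssign {V : Type*} [Fintype V] [DecidableEq V] (m : ℕ) (g : (V → Fin m) → ℝ) : ℝ :=
  (∑ σ : V → Fin m, g σ) / (Fintype.card (V → Fin m) : ℝ)

/-- The set of elements assigned to machine `i` by the assignment `σ`. -/
def machineSet {V : Type*} [Fintype V] [DecidableEq V] {m : ℕ}
    (σ : V → Fin m) (i : Fin m) : Finset V :=
  Finset.univ.filter (fun e => σ e = i)

/-!
Fix `e ∈ OPT`. On every machine greedy either ignores `e` (adding `e` does not change its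
solution) or selects it. As the machine of `e` is uniform and independent of the rest of the
assignment, `P[e ∈ S] + (1/m) ∑ᵢ P[e is ignored on machine i] ≥ 1`. Weighting `e` by its marginal
gain along a fixed order of `OPT`, a modular lower bound for `f` on subsets of `OPT`, this becomes
`E[f(OPT ∩ S)] + (1/m) ∑ᵢ E[f(Oᵢ)] ≥ f(OPT)`, with `Oᵢ` the elements of `OPT` ignored on machine
`i`. By localization greedy on machine `i` is unchanged by adding `Oᵢ`, so it is `α`-good against
`Oᵢ`, while `Alg` is `β`-good against `OPT ∩ S`; combine with weights `α/(α+β)` and `β/(α+β)`.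
-/

open scoped BigOperators

section GreedyRun

variable {V : Type*} [DecidableEq V] (f : Finset V → ℝ) (I : Finset V → Prop) [DecidablePred I]

noncomputable def greedyCandidates (X S : Finset V) : Finset V :=
  (X \ S).filter (fun e => I (insert e S) ∧ 0 ≤ f (insert e S) - f S)

variable {f I}

lemma mem_greedyCandidates {X S : Finset V} {e : V} :
    e ∈ greedyCandidates f I X S ↔
      e ∈ X ∧ e ∉ S ∧ I (insert e S) ∧ 0 ≤ f (insert e S) - f S := by
  simp [greedyCandidates, and_assoc]

lemma greedyCandidates_mono {X Y S : Finset V} (hXY : X ⊆ Y) :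
    greedyCandidates f I X S ⊆ greedyCandidates f I Y S := fun _ he => by
  obtain ⟨heX, he⟩ := mem_greedyCandidates.1 he
  exact mem_greedyCandidates.2 ⟨hXY heX, he⟩

variable [Fintype V]

variable (f I) in
/- With `[Fintype V]` in scope the `∀ e' ∈ _` below gets the same decidability instance as in
`greedyAux`, so that `greedyAux` unfolds definitionally to `greedyPick`. -/
noncomputable def greedyBest (X S : Finset V) : Finset V :=
  (greedyCandidates f I X S).filter
    (fun e => ∀ e' ∈ greedyCandidates f I X S, f (insert e' S) - f S ≤ f (insert e S) - f S)

lemma greedyBest_nonempty {X S : Finset V} (h : (greedyCandidates f I X S).Nonempty) :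
    (greedyBest f I X S).Nonempty := by
  obtain ⟨g, hg, hmax⟩ := exists_max_image _ (fun e => f (insert e S) - f S) h
  exact ⟨g, mem_filter.2 ⟨hg, hmax⟩⟩

section Pick

variable [LinearOrder V]

variable (f I) in
noncomputable def greedyPick (X S : Finset V) : Option V :=
  if h : (greedyBest f I X S).Nonempty then some ((greedyBest f I X S).min' h) else none

lemma greedyPick_eq_some_iff {X S : Finset V} {g : V} :
    greedyPick f I X S = some g ↔ g ∈ greedyCandidates f I X S ∧
      ∀ x ∈ greedyCandidates f I X S, f (insert x S) - f S ≤ f (insert g S) - f S ∧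
        (f (insert x S) - f S = f (insert g S) - f S → g ≤ x) := by
  have mem_best {x} : x ∈ greedyBest f I X S ↔ x ∈ greedyCandidates f I X S ∧
      ∀ y ∈ greedyCandidates f I X S, f (insert y S) - f S ≤ f (insert x S) - f S :=
    mem_filter
  unfold greedyPick
  split_ifs with h
  · rw [Option.some.injEq]
    constructor
    · rintro rfl
      obtain ⟨hmem, hmax⟩ := mem_best.1 (min'_mem _ h)
      refine ⟨hmem, fun x hx => ⟨hmax x hx, fun hxg => min'_le _ _ (mem_best.2 ⟨hx, ?_⟩)⟩⟩
      exact fun y hy => hxg ▸ hmax y hy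
    · rintro ⟨hg, hmax⟩
      refine le_antisymm (min'_le _ _ ?_) (le_min' _ _ _ fun x hx => ?_)
      · exact mem_best.2 ⟨hg, fun y hy => (hmax y hy).1⟩
      · obtain ⟨hx, hxmax⟩ := mem_best.1 hx
        exact (hmax x hx).2 (le_antisymm (hmax x hx).1 (hxmax g hg))
  · simp only [false_iff, not_and]
    exact fun hg _ => h (greedyBest_nonempty ⟨g, hg⟩)

lemma greedyPick_eq_none_iff {X S : Finset V} :
    greedyPick f I X S = none ↔ greedyCandidates f I X S = ∅ := by
  unfold greedyPick
  split_ifs with h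
  · simp only [false_iff, ← ne_eq, ← nonempty_iff_ne_empty]
    exact h.mono (filter_subset _ _)
  · simp only [true_iff, ← not_nonempty_iff_eq_empty]
    exact fun hC => h (greedyBest_nonempty hC)

lemma greedyPick_eq_some_of_subset {X Y S : Finset V} {g : V} (hXY : X ⊆ Y)
    (hY : greedyPick f I Y S = some g) (hgX : g ∈ X) : greedyPick f I X S = some g := by
  rw [greedyPick_eq_some_iff] at hY ⊢
  obtain ⟨hgY, hmax⟩ := hY
  exact ⟨mem_greedyCandidates.2 ⟨hgX, (mem_greedyCandidates.1 hgY).2⟩,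
    fun x hx => hmax x (greedyCandidates_mono hXY hx)⟩

lemma greedyPick_eq_none_of_subset {X Y S : Finset V} (hXY : X ⊆ Y)
    (hY : greedyPick f I Y S = none) : greedyPick f I X S = none := by
  rw [greedyPick_eq_none_iff, ← subset_empty] at hY ⊢
  exact (greedyCandidates_mono hXY).trans hY

lemma mem_of_greedyPick_eq_some {X S : Finset V} {g : V} (h : greedyPick f I X S = some g) :
    g ∈ X :=
  (mem_greedyCandidates.1 (greedyPick_eq_some_iff.1 h).1).1

lemma greedyAux_succ_of_greedyPick_eq_some {X S : Finset V} {g : V} {n : ℕ}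
    (h : greedyPick f I X S = some g) :
    greedyAux f I X (n + 1) S = greedyAux f I X n (insert g S) := by
  unfold greedyPick at h
  split_ifs at h with hne
  cases h
  exact dif_pos hne

lemma greedyAux_succ_of_greedyPick_eq_none {X S : Finset V} {n : ℕ}
    (h : greedyPick f I X S = none) : greedyAux f I X (n + 1) S = S := by
  unfold greedyPick at h
  split_ifs at h with hne
  exact dif_neg hne

lemma subset_greedyAux (X : Finset V) (n : ℕ) (S : Finset V) : S ⊆ greedyAux f I X n S := by
  induction n generalizing S with
  | zero => exact subset_rfl
  | succ n ih =>
    cases hpick : greedyPick f I X S with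
    | none => rw [greedyAux_succ_of_greedyPick_eq_none hpick]
    | some g =>
      rw [greedyAux_succ_of_greedyPick_eq_some hpick]
      exact (subset_insert g S).trans (ih _)

lemma greedyAux_subset_union (X : Finset V) (n : ℕ) (S : Finset V) :
    greedyAux f I X n S ⊆ X ∪ S := by
  induction n generalizing S with
  | zero => exact subset_union_right
  | succ n ih =>
    cases hpick : greedyPick f I X S with
    | none =>
      rw [greedyAux_succ_of_greedyPick_eq_none hpick]
      exact subset_union_right
    | some g =>
      rw [greedyAux_succ_of_greedyPick_eq_some hpick]
      refine (ih _).trans (union_subset subset_union_left (insert_subset ?_ subset_union_right))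
      exact mem_union_left _ (mem_of_greedyPick_eq_some hpick)

lemma greedyAux_insert_eq_or_mem {X S : Finset V} {e : V} (heX : e ∉ X) (heS : e ∉ S) (n : ℕ) :
    greedyAux f I (insert e X) n S = greedyAux f I X n S ∨
      e ∈ greedyAux f I (insert e X) n S := by
  induction n generalizing S with
  | zero => exact Or.inl rfl
  | succ n ih =>
    cases hpick : greedyPick f I (insert e X) S with
    | none =>
      left
      rw [greedyAux_succ_of_greedyPick_eq_none hpick, greedyAux_succ_of_greedyPick_eq_none
        (greedyPick_eq_none_of_subset (subset_insert e X) hpick)]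
    | some g =>
      rw [greedyAux_succ_of_greedyPick_eq_some hpick]
      obtain rfl | hge := eq_or_ne g e
      · exact Or.inr (subset_greedyAux _ _ _ (mem_insert_self g S))
      · have hgX : g ∈ X := (mem_insert.1 (mem_of_greedyPick_eq_some hpick)).resolve_left hge
        rw [greedyAux_succ_of_greedyPick_eq_some
          (greedyPick_eq_some_of_subset (subset_insert e X) hpick hgX)]
        exact ih (by simp [heS, hge.symm])

lemma greedyAux_union_eq {X D S : Finset V} (n : ℕ)
    (hD : ∀ d ∈ D, d ∉ X ∧ d ∉ S ∧ greedyAux f I (insert d X) n S = greedyAux f I X n S) :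
    greedyAux f I (X ∪ D) n S = greedyAux f I X n S := by
  induction n generalizing S with
  | zero => rfl
  | succ n ih =>
    cases hpick : greedyPick f I (X ∪ D) S with
    | none =>
      rw [greedyAux_succ_of_greedyPick_eq_none hpick, greedyAux_succ_of_greedyPick_eq_none
        (greedyPick_eq_none_of_subset subset_union_left hpick)]
    | some g =>
      have hinsert {d} (hd : d ∈ D) : insert d X ⊆ X ∪ D :=
        insert_subset (mem_union_right X hd) subset_union_left
      -- A pick `g ∈ D` would also be the first pick on `insert g X`, but by `hD` that run never
      -- leaves `X ∪ S`.
      have hgX : g ∈ X := by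
        refine (mem_union.1 (mem_of_greedyPick_eq_some hpick)).resolve_right fun hgD => ?_
        obtain ⟨hgX, hgS, hrun⟩ := hD g hgD
        have hg : g ∈ greedyAux f I (insert g X) n (insert g S) :=
          subset_greedyAux _ _ _ (mem_insert_self g S)
        rw [← greedyAux_succ_of_greedyPick_eq_some
          (greedyPick_eq_some_of_subset (hinsert hgD) hpick (mem_insert_self g X)), hrun] at hg
        rcases mem_union.1 (greedyAux_subset_union X (n + 1) S hg) with hg | hg
        exacts [hgX hg, hgS hg]
      have hpickX := greedyPick_eq_some_of_subset subset_union_left hpick hgX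
      rw [greedyAux_succ_of_greedyPick_eq_some hpick, greedyAux_succ_of_greedyPick_eq_some hpickX]
      refine ih fun d hd => ?_
      obtain ⟨hdX, hdS, hrun⟩ := hD d hd
      rw [greedyAux_succ_of_greedyPick_eq_some (greedyPick_eq_some_of_subset (hinsert hd)
        hpick (mem_insert_of_mem hgX)), greedyAux_succ_of_greedyPick_eq_some hpickX] at hrun
      exact ⟨hdX, by simp [hdS, (ne_of_mem_of_not_mem hgX hdX).symm], hrun⟩

lemma greedy_insert_eq_or_mem {X : Finset V} {e : V} (heX : e ∉ X) :
    greedy f I (insert e X) = greedy f I X ∨ e ∈ greedy f I (insert e X) :=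
  greedyAux_insert_eq_or_mem heX (notMem_empty e) _

lemma greedy_union_eq {X D : Finset V} (hD : ∀ d ∈ D, greedy f I (insert d X) = greedy f I X) :
    greedy f I (X ∪ D) = greedy f I X := by
  rw [← union_sdiff_self_eq_union]
  exact greedyAux_union_eq _ fun d hd =>
    ⟨(mem_sdiff.1 hd).2, notMem_empty d, hD d (mem_sdiff.1 hd).1⟩

end Pick

end GreedyRun

section Chain

variable {V : Type*} {f : Finset V → ℝ}

lemma Submodular.marginal_le_of_subset [DecidableEq V] (hf : Submodular f) {A B : Finset V}
    {e : V} (hBA : B ⊆ A) (heA : e ∉ A) : f (insert e A) - f A ≤ f (insert e B) - f B := by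
  have h := hf (insert e B) A
  rw [insert_union, union_eq_right.2 hBA, insert_inter_of_notMem heA, inter_eq_left.2 hBA] at h
  linarith

variable [LinearOrder V]

variable (f) in
def chainGain (O : Finset V) (e : V) : ℝ :=
  f {x ∈ O | x ≤ e} - f {x ∈ O | x < e}

variable (f) in
lemma sum_chainGain (O : Finset V) : ∑ e ∈ O, chainGain f O e = f O - f ∅ := by
  induction O using induction_on_max with
  | empty => simp
  | insert a s ha ih =>
    have has : a ∉ s := fun h => lt_irrefl a (ha a h)
    have hrest : ∀ e ∈ s, chainGain f (insert a s) e = chainGain f s e := fun e he => by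
      simp [chainGain, filter_insert, not_le.2 (ha e he), not_lt.2 (ha e he).le]
    have htop : chainGain f (insert a s) a = f (insert a s) - f s := by
      rw [chainGain, filter_true_of_mem fun x hx => ?_, filter_insert, if_neg (lt_irrefl a),
        filter_true_of_mem ha]
      exact (mem_insert.1 hx).elim le_of_eq fun hx => (ha x hx).le
    rw [sum_insert has, sum_congr rfl hrest, ih, htop]
    ring

lemma chainGain_nonneg (hf : Monotone f) (O : Finset V) (e : V) : 0 ≤ chainGain f O e :=
  sub_nonneg.2 <| hf <| monotone_filter_right O fun _ _ => le_of_lt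

variable [DecidableEq V]

lemma filter_le_eq_insert_filter_lt {O : Finset V} {e : V} (he : e ∈ O) :
    {x ∈ O | x ≤ e} = insert e {x ∈ O | x < e} := by
  ext x
  simp only [mem_filter, mem_insert, le_iff_lt_or_eq]
  aesop

lemma Submodular.add_sum_chainGain_le (hf : Submodular f) {A O : Finset V} (hAO : A ⊆ O) :
    f ∅ + ∑ e ∈ A, chainGain f O e ≤ f A := by
  have hgain : ∀ e ∈ A, chainGain f O e ≤ chainGain f A e := fun e he => by
    rw [chainGain, chainGain, filter_le_eq_insert_filter_lt (hAO he),
      filter_le_eq_insert_filter_lt he]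
    exact hf.marginal_le_of_subset (filter_subset_filter _ hAO) (by simp)
  linarith [sum_le_sum hgain, sum_chainGain f A]

end Chain

lemma boole_le_boole {R : Type*} [Zero R] [One R] [Preorder R] [ZeroLEOneClass R]
    {p q : Prop} [Decidable p] [Decidable q] (h : p → q) :
    (if p then 1 else 0 : R) ≤ if q then 1 else 0 := by
  split_ifs <;> simp_all

lemma expect_apply_eval_eq_expect_expect {V ι M : Type*} [Fintype V] [DecidableEq V] [Fintype ι]
    [Nonempty ι] [AddCommMonoid M] [Module ℚ≥0 M] (F : (V → ι) → ι → M) (e : V)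
    (hF : ∀ σ j i, F (Function.update σ e j) i = F σ i) :
    𝔼 σ, F σ (σ e) = 𝔼 σ, 𝔼 i, F σ i := by
  set E := Equiv.funSplitAt e ι
  have split (g : (V → ι) → M) : 𝔼 σ, g σ = 𝔼 j, 𝔼 τ, g (E.symm (j, τ)) := by
    rw [Fintype.expect_equiv E g (fun p => g (E.symm p)) (by simp), ← expect_product',
      univ_product_univ]
  have hswap : ∀ j i τ, F (E.symm (j, τ)) i = F (E.symm (i, τ)) i := fun j i τ => by
    have hupdate : Function.update (E.symm (j, τ)) e i = E.symm (i, τ) := by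
      ext v
      by_cases hv : v = e
      · subst hv; simp [E]
      · simp [E, hv]
    rw [← hupdate, hF]
  calc 𝔼 σ, F σ (σ e)
      = 𝔼 τ, 𝔼 j, F (E.symm (j, τ)) j := by rw [split, expect_comm]; simp [E]
    _ = 𝔼 (_k : ι), 𝔼 τ, 𝔼 j, F (E.symm (j, τ)) j := (Fintype.expect_const _).symm
    _ = 𝔼 σ, 𝔼 i, F σ i := by
      rw [split]
      exact expect_congr rfl fun k _ => expect_congr rfl fun τ _ =>
        expect_congr rfl fun i _ => (hswap k i τ).symm

section RandomAssignment

variable {V : Type*} [DecidableEq V]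

def ignoredBy (G : Finset V → Finset V) (O X : Finset V) : Finset V :=
  {x ∈ O | G (insert x X) = G X}

lemma ignoredBy_subset {G : Finset V → Finset V} {O X : Finset V} : ignoredBy G O X ⊆ O :=
  filter_subset _ O

variable [Fintype V] {m : ℕ}

def machineUnion (G : Finset V → Finset V) (σ : V → Fin m) : Finset V :=
  univ.biUnion fun i => G (machineSet σ i)

lemma mem_machineSet {σ : V → Fin m} {i : Fin m} {v : V} : v ∈ machineSet σ i ↔ σ v = i := by
  simp [machineSet]

lemma erase_machineSet_update (σ : V → Fin m) (e : V) (j i : Fin m) :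
    (machineSet (Function.update σ e j) i).erase e = (machineSet σ i).erase e := by
  ext v
  by_cases hv : v = e <;> simp [mem_machineSet, hv]

variable [NeZero m] {G : Finset V → Finset V}

lemma one_le_expect_mem_machineUnion_add_expect_mem_ignoredBy
    (hG : ∀ X e, e ∉ X → G (insert e X) = G X ∨ e ∈ G (insert e X)) {O : Finset V} {e : V}
    (he : e ∈ O) :
    1 ≤ 𝔼 σ : V → Fin m, ((if e ∈ machineUnion G σ then 1 else 0 : ℝ) +
      𝔼 i, if e ∈ ignoredBy G O (machineSet σ i) then 1 else 0) := by
  -- `B σ i`, hence `a σ i` and `r σ i`, do not depend on `σ e`.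
  set B : (V → Fin m) → Fin m → Finset V := fun σ i => (machineSet σ i).erase e
  set a : (V → Fin m) → Fin m → ℝ := fun σ i => if e ∈ G (insert e (B σ i)) then 1 else 0
  set r : (V → Fin m) → Fin m → ℝ := fun σ i => if G (insert e (B σ i)) = G (B σ i) then 1 else 0
  have hsymm : 𝔼 σ, r σ (σ e) = 𝔼 σ, 𝔼 i, r σ i :=
    expect_apply_eval_eq_expect_expect r e fun σ j i => by simp only [r, B, erase_machineSet_update]
  have hone : ∀ σ i, 1 ≤ a σ i + r σ i := fun σ i => by
    have := hG (B σ i) e (notMem_erase e _)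
    simp only [a, r]
    split_ifs <;> grind
  have ha : ∀ σ, a σ (σ e) ≤ if e ∈ machineUnion G σ then 1 else 0 :=
    fun σ => boole_le_boole fun h => mem_biUnion.2 ⟨σ e, mem_univ _, by
      rwa [insert_erase (mem_machineSet.2 rfl)] at h⟩
  have hr : ∀ σ i, r σ i ≤ if e ∈ ignoredBy G O (machineSet σ i) then 1 else 0 :=
    fun σ i => boole_le_boole fun h => mem_filter.2 ⟨he, by
      by_cases hi : σ e = i
      · rw [insert_eq_of_mem (mem_machineSet.2 hi)]
      · rwa [← erase_eq_of_notMem (mt mem_machineSet.1 hi)]⟩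
  calc 1 ≤ 𝔼 σ, (a σ (σ e) + r σ (σ e)) := le_expect univ_nonempty fun σ _ => hone σ (σ e)
    _ = 𝔼 σ, (a σ (σ e) + 𝔼 i, r σ i) := by rw [expect_add_distrib, expect_add_distrib, hsymm]
    _ ≤ _ := expect_le_expect fun σ _ => add_le_add (ha σ) (expect_le_expect fun i _ => hr σ i)

variable [LinearOrder V] {f : Finset V → ℝ}

theorem le_expect_inter_machineUnion_add_expect_ignoredBy (hsub : Submodular f)
    (hmono : Monotone f) (hf₀ : 0 ≤ f ∅)
    (hG : ∀ X e, e ∉ X → G (insert e X) = G X ∨ e ∈ G (insert e X)) (O : Finset V) :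
    f O ≤ 𝔼 σ : V → Fin m,
      (f (O ∩ machineUnion G σ) + 𝔼 i, f (ignoredBy G O (machineSet σ i))) := by
  set c := chainGain f O
  have hlow : ∀ A, f ∅ + ∑ e ∈ O, c e * (if e ∈ A then 1 else 0) ≤ f (O ∩ A) := fun A => by
    simpa only [mul_boole, sum_ite_mem] using
      hsub.add_sum_chainGain_le (inter_subset_left : O ∩ A ⊆ O)
  calc f O
      ≤ 2 * f ∅ + ∑ e ∈ O, c e * 𝔼 σ : V → Fin m,
          ((if e ∈ machineUnion G σ then 1 else 0 : ℝ) +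
            𝔼 i, if e ∈ ignoredBy G O (machineSet σ i) then 1 else 0) := by
        have hle : ∑ e ∈ O, c e * 1 ≤ _ := sum_le_sum fun e he => mul_le_mul_of_nonneg_left
          (one_le_expect_mem_machineUnion_add_expect_mem_ignoredBy (m := m) hG he)
          (chainGain_nonneg hmono O e)
        simp only [mul_one] at hle
        linarith [sum_chainGain f O]
    _ = 𝔼 σ : V → Fin m,
          ((f ∅ + ∑ e ∈ O, c e * if e ∈ machineUnion G σ then 1 else 0) +
            𝔼 i, (f ∅ + ∑ e ∈ O, c e * if e ∈ ignoredBy G O (machineSet σ i) then 1 else 0)) := by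
      simp only [expect_add_distrib, Fintype.expect_const, mul_add, sum_add_distrib, mul_expect,
        expect_sum_comm]
      ring
    _ ≤ _ := by
      gcongr with σ _ i
      · exact hlow _
      · exact (hlow _).trans_eq (congrArg f (inter_eq_right.2 ignoredBy_subset))

end RandomAssignment

lemma mul_div_add_mul_le_max {K : Type*} [Field K] [LinearOrder K] [IsStrictOrderedRing K]
    {α β x y u v : K} (hα : 0 < α) (hβ : 0 < β) (hx : β * x ≤ u) (hy : α * y ≤ v) :
    α * β / (α + β) * (x + y) ≤ max u v := by
  rw [div_mul_eq_mul_div, div_le_iff₀ (by positivity)]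
  nlinarith [le_max_left u v, le_max_right u v]

theorem randgreedi_main_general {V : Type*} [Fintype V] [DecidableEq V] [LinearOrder V]
    (f : Finset V → ℝ) (I : Finset V → Prop) [DecidablePred I]
    (hsub : Submodular f) (hmono : ∀ A B : Finset V, A ⊆ B → f A ≤ f B)
    (hnn : ∀ A : Finset V, 0 ≤ f A)
    (hher : ∀ A B : Finset V, A ⊆ B → I B → I A)
    (α : ℝ) (hα : 0 < α)
    (happrox : ∀ V' O : Finset V, O ⊆ V' → I O → α * f O ≤ f (greedy f I V'))
    (Alg : Finset V → Finset V) (β : ℝ) (hβ : 0 < β)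
    (halg : ∀ V' O : Finset V, O ⊆ V' → I O → β * f O ≤ f (Alg V'))
    (m : ℕ) (hm : 0 < m)
    (OPT : Finset V) (hOPT : I OPT) :
    α * β / (α + β) * f OPT ≤
      expAssign m (fun σ =>
        max (f (Alg (Finset.univ.biUnion (fun i : Fin m => greedy f I (machineSet σ i)))))
          ((Finset.univ : Finset (Fin m)).sup'
            (Finset.univ_nonempty_iff.mpr ⟨⟨0, hm⟩⟩)
            (fun i => f (greedy f I (machineSet σ i))))) := by
  have : NeZero m := ⟨hm.ne'⟩
  set S := machineUnion (m := m) (greedy f I)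
  set O := fun (σ : V → Fin m) i => ignoredBy (greedy f I) OPT (machineSet σ i)
  have hAlg : ∀ σ, β * f (OPT ∩ S σ) ≤ f (Alg (S σ)) := fun σ =>
    halg _ _ inter_subset_right (hher _ _ inter_subset_left hOPT)
  have hGreedy : ∀ σ, α * 𝔼 i, f (O σ i) ≤
      univ.sup' (univ_nonempty_iff.mpr ⟨⟨0, hm⟩⟩) fun i => f (greedy f I (machineSet σ i)) := by
    intro σ
    rw [mul_expect]
    refine expect_le univ_nonempty fun i _ => le_trans ?_ (le_sup' (fun i => _) (mem_univ i))
    have := happrox (machineSet σ i ∪ O σ i) (O σ i) subset_union_right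
      (hher _ _ ignoredBy_subset hOPT)
    rwa [greedy_union_eq (D := O σ i) fun d hd => (mem_filter.1 hd).2] at this
  rw [expAssign, ← Fintype.expect_eq_sum_div_card]
  calc α * β / (α + β) * f OPT
      ≤ α * β / (α + β) * 𝔼 σ, (f (OPT ∩ S σ) + 𝔼 i, f (O σ i)) := by
        gcongr
        exact le_expect_inter_machineUnion_add_expect_ignoredBy hsub hmono
          (hnn ∅) (fun _ _ => greedy_insert_eq_or_mem) OPT
    _ = 𝔼 σ, α * β / (α + β) * (f (OPT ∩ S σ) + 𝔼 i, f (O σ i)) := mul_expect _ _ _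
    _ ≤ _ := expect_le_expect fun σ _ => mul_div_add_mul_le_max hα hβ (hAlg σ) (hGreedy σ)

/-- Theorem 5 (main theorem): RandGreeDi is an `αβ/(α+β)`-approximation in expectation. -/
theorem randgreedi_main {V : Type*} [Fintype V] [DecidableEq V] [LinearOrder V]
    (f : Finset V → ℝ) (I : Finset V → Prop) [DecidablePred I]
    (hsub : Submodular f) (hmono : ∀ A B : Finset V, A ⊆ B → f A ≤ f B)
    (hnn : ∀ A : Finset V, 0 ≤ f A)
    (hher : ∀ A B : Finset V, A ⊆ B → I B → I A) (hempty : I ∅)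
    (α : ℝ) (hα : 0 < α)
    (happrox : ∀ V' O : Finset V, O ⊆ V' → I O → α * f O ≤ f (greedy f I V'))
    (Alg : Finset V → Finset V) (β : ℝ) (hβ : 0 < β)
    (halg : ∀ V' O : Finset V, O ⊆ V' → I O → β * f O ≤ f (Alg V'))
    (m : ℕ) (hm : 0 < m)
    (OPT : Finset V) (hOPT : I OPT) (hopt : ∀ A : Finset V, I A → f A ≤ f OPT) :
    α * β / (α + β) * f OPT ≤
      expAssign m (fun σ =>
        max (f (Alg (Finset.univ.biUnion (fun i : Fin m => greedy f I (machineSet σ i)))))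
          ((Finset.univ : Finset (Fin m)).sup'
            (Finset.univ_nonempty_iff.mpr ⟨⟨0, hm⟩⟩)
            (fun i => f (greedy f I (machineSet σ i))))) :=
  randgreedi_main_general f I hsub hmono hnn hher α hα happrox Alg β hβ halg m hm OPT hOPT
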